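/- arXiv:1906.07447 — 2 statements merged into one kernel-verified Lean document; each statement's English description precedes it below -/
import Mathlib

section
/- Let G = A ⋊ Z/2 with A a finite abelian group of odd order, Z/2 acting by inversion, and let c ⊂ G be the conjugacy class of involutions. Then the pair (G, c) has the non-splitting property: for every subgroup H ≤ G, the intersection c ∩ H is either empty or is a single conjugacy class of H. -/
/-!
In `A ⋊ ℤ/2` the elements of `A` have odd order and every element outside `A` is an
involution. Hence the product `u = a * b` of two involutions lies in `A` and has odd order
`2m + 1`; since `a` inverts `u`, conjugation by `u ^ m` sends `a` to `a * u = b`. The same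
computation takes place inside any subgroup `H`, so the involutions of `H` form one conjugacy
class of `H` when there are any.
-/

/-- The action of `ℤ/2` on an abelian group `A` in which the nontrivial element
acts by inversion. -/
def invAut (A : Type*) [CommGroup A] : Multiplicative (ZMod 2) →* MulAut A where
  toFun x := (MulEquiv.inv A : MulAut A) ^ (Multiplicative.toAdd x).val
  map_one' := by simp
  map_mul' x y := by
    have h2 : (MulEquiv.inv A : MulAut A) ^ 2 = 1 := by
      ext a
      show a⁻¹⁻¹ = a
      exact inv_inv a
    show (MulEquiv.inv A : MulAut A) ^ (Multiplicative.toAdd x + Multiplicative.toAdd y).val = _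
    rw [ZMod.val_add, ← pow_eq_pow_mod _ h2, pow_add]

theorem isConj_of_sq_eq_one_of_odd_orderOf_mul {G : Type*} [Group G] {a b : G}
    (ha : a ^ 2 = 1) (hb : b ^ 2 = 1) (hab : Odd (orderOf (a * b))) : IsConj a b := by
  obtain ⟨m, hm⟩ := hab
  set u := a * b
  have ha_inv : a⁻¹ = a := inv_eq_of_mul_eq_one_right (by rw [← sq, ha])
  have hb_inv : b⁻¹ = b := inv_eq_of_mul_eq_one_right (by rw [← sq, hb])
  have hb_eq : b = a * u := by rw [← mul_assoc, ← sq, ha, one_mul]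
  have h_conj_u : a * u * a⁻¹ = u⁻¹ := by
    simp only [u, mul_inv_rev, ha_inv, hb_inv, ← mul_assoc, ← sq, ha, one_mul]
  have hu : u ^ (2 * m + 1) = 1 := hm ▸ pow_orderOf_eq_one u
  refine isConj_iff.mpr ⟨u ^ m, ?_⟩
  calc u ^ m * a * (u ^ m)⁻¹ = a * (a * u * a⁻¹) ^ m * (u ^ m)⁻¹ := by
        rw [conj_pow, ha_inv]; simp only [← mul_assoc, ← sq, ha, one_mul]
    _ = a * (u ^ (2 * m + 1))⁻¹ * u := by rw [h_conj_u]; group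
    _ = b := by rw [hu, inv_one, mul_one, hb_eq]

theorem setOf_orderOf_eq_two_eq_empty_or_isConj {G : Type*} [Group G]
    (h : ∀ a b : G, orderOf a = 2 → orderOf b = 2 → Odd (orderOf (a * b))) :
    {g : G | orderOf g = 2} = ∅ ∨
      ∃ g₀ : G, orderOf g₀ = 2 ∧ {g : G | orderOf g = 2} = {g : G | IsConj g₀ g} := by
  rcases Set.eq_empty_or_nonempty {g : G | orderOf g = 2} with hempty | ⟨g₀, hg₀⟩
  · exact Or.inl hempty
  refine Or.inr ⟨g₀, hg₀, Set.ext fun g => ⟨fun hg => ?_, fun ⟨c, hc⟩ => ?_⟩⟩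
  · exact isConj_of_sq_eq_one_of_odd_orderOf_mul (hg₀ ▸ pow_orderOf_eq_one g₀)
      ((show orderOf g = 2 from hg) ▸ pow_orderOf_eq_one g) (h g₀ g hg₀ hg)
  · exact (hc.orderOf_eq (c : G)).symm.trans hg₀

namespace SemidirectProduct

variable {N H : Type*} [Group N] [Group H] {φ : H →* MulAut N}

theorem orderOf_inl (n : N) : orderOf (inl n : N ⋊[φ] H) = orderOf n :=
  orderOf_injective inl inl_injective n

theorem odd_orderOf_of_right_eq_one [Fintype N] (hN : Odd (Fintype.card N)) {g : N ⋊[φ] H}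
    (hg : g.right = 1) : Odd (orderOf g) := by
  rw [← inl_left_mul_inr_right g, hg, map_one, mul_one, orderOf_inl]
  exact hN.of_dvd_nat orderOf_dvd_card

end SemidirectProduct

section Dihedral

open SemidirectProduct

variable {A : Type*} [CommGroup A]

theorem invAut_ofAdd_one_apply (a : A) : invAut A (Multiplicative.ofAdd 1) a = a⁻¹ := rfl

theorem multiplicative_zmod_two_eq_one_or (x : Multiplicative (ZMod 2)) :
    x = 1 ∨ x = Multiplicative.ofAdd 1 := by
  revert x; decide

theorem orderOf_eq_two_of_right_eq_ofAdd_one {g : A ⋊[invAut A] Multiplicative (ZMod 2)}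
    (hg : g.right = Multiplicative.ofAdd 1) : orderOf g = 2 := by
  refine orderOf_eq_prime ?_ fun h => by rw [h, one_right] at hg; exact absurd hg (by decide)
  ext
  · simp [sq, hg, invAut_ofAdd_one_apply]
  · simp [sq, hg]; rfl

theorem orderOf_eq_two_iff_right_eq_ofAdd_one [Fintype A] (hA : Odd (Fintype.card A))
    {g : A ⋊[invAut A] Multiplicative (ZMod 2)} :
    orderOf g = 2 ↔ g.right = Multiplicative.ofAdd 1 := by
  refine ⟨fun hg => ?_, orderOf_eq_two_of_right_eq_ofAdd_one⟩
  refine (multiplicative_zmod_two_eq_one_or g.right).resolve_left fun h => ?_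
  have := odd_orderOf_of_right_eq_one hA h
  rw [hg] at this
  exact Nat.not_odd_iff_even.mpr even_two this

theorem closure_setOf_orderOf_eq_two_eq_top :
    Subgroup.closure {g : A ⋊[invAut A] Multiplicative (ZMod 2) | orderOf g = 2} = ⊤ := by
  set s : A ⋊[invAut A] Multiplicative (ZMod 2) := inr (Multiplicative.ofAdd 1)
  have mem_of_right_eq {g : A ⋊[invAut A] Multiplicative (ZMod 2)}
      (hg : g.right = Multiplicative.ofAdd 1) : g ∈ Subgroup.closure {g | orderOf g = 2} :=
    Subgroup.subset_closure (orderOf_eq_two_of_right_eq_ofAdd_one hg)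
  refine eq_top_iff.mpr fun g _ => ?_
  rcases multiplicative_zmod_two_eq_one_or g.right with h | h
  · simpa using mul_mem (mem_of_right_eq (g := g * s) (by simp [s, h]))
      (inv_mem (mem_of_right_eq (g := s) rfl))
  · exact mem_of_right_eq h

theorem odd_orderOf_mul_of_orderOf_eq_two [Fintype A] (hA : Odd (Fintype.card A))
    {g h : A ⋊[invAut A] Multiplicative (ZMod 2)} (hg : orderOf g = 2) (hh : orderOf h = 2) :
    Odd (orderOf (g * h)) := by
  refine odd_orderOf_of_right_eq_one hA ?_
  rw [mul_right, (orderOf_eq_two_iff_right_eq_ofAdd_one hA).mp hg,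
    (orderOf_eq_two_iff_right_eq_ofAdd_one hA).mp hh]
  rfl

end Dihedral

/-- Let `G = A ⋊ ℤ/2` with `A` a finite abelian group of odd order, `ℤ/2`
acting by inversion, and `c ⊆ G` the conjugacy class of involutions. Then
`(G, c)` has the non-splitting property: `c` generates `G`, and for every
subgroup `H ≤ G` the intersection `c ∩ H` is either empty or a single
conjugacy class of `H`. -/
theorem involutions_non_splitting (A : Type*) [CommGroup A] [Fintype A]
    (hA : Odd (Fintype.card A)) :
    let G := SemidirectProduct A (Multiplicative (ZMod 2)) (invAut A)
    Subgroup.closure {g : G | orderOf g = 2} = ⊤ ∧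
    ∀ H : Subgroup G,
      {h : H | orderOf (h : G) = 2} = ∅ ∨
      ∃ h₀ : H, orderOf (h₀ : G) = 2 ∧
        {h : H | orderOf (h : G) = 2} = {h : H | IsConj h₀ h} := by
  refine ⟨closure_setOf_orderOf_eq_two_eq_top, fun H => ?_⟩
  simp only [Subgroup.orderOf_coe]
  refine setOf_orderOf_eq_two_eq_empty_or_isConj fun a b ha hb => ?_
  rw [← Subgroup.orderOf_coe] at ha hb ⊢
  exact odd_orderOf_mul_of_orderOf_eq_two hA ha hb
end

section
/- Let G be a group, c ⊆ G conjugation-invariant, and suppose the tuple (g_1,…,g_n) ∈ c^n has trivial global monodromy, i.e. g_1 g_2 ⋯ g_n = 1. Then for any tuple (h_1,…,h_m) ∈ c^m, the concatenations (g_1,…,g_n,h_1,…,h_m) and (h_1,…,h_m,g_1,…,g_n) are equivalent under the braid group action on c^{n+m} (the equivalence relation generated by the elementary braid moves). -/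
/-- The `i`-th elementary braid operation on tuples:
`σ_i(g_1,…,g_n) = (g_1,…,g_{i-1}, g_i g_{i+1} g_i⁻¹, g_i, g_{i+2},…,g_n)`. -/
def braidMove {G : Type*} [Group G] {n : ℕ} (i : ℕ) (hi : i + 1 < n)
    (g : Fin n → G) : Fin n → G :=
  fun j =>
    if (j : ℕ) = i then
      g ⟨i, Nat.lt_of_succ_lt hi⟩ * g ⟨i + 1, hi⟩ * (g ⟨i, Nat.lt_of_succ_lt hi⟩)⁻¹
    else if (j : ℕ) = i + 1 then g ⟨i, Nat.lt_of_succ_lt hi⟩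
    else g j


/-- The equivalence relation on tuples generated by the elementary braid moves. -/
def BraidEquiv {G : Type*} [Group G] {N : ℕ} : (Fin N → G) → (Fin N → G) → Prop :=
  Relation.EqvGen (fun a b => ∃ (i : ℕ) (hi : i + 1 < N), b = braidMove i hi a)


/-! Braiding a letter `a` rightwards past a word `w` conjugates every letter of `w` by `a`:
`(a, x, …) ↦ (a x a⁻¹, a, …)`. Moving the letters of `g` one by one past `h` therefore turns
`(g, h)` into `(h', g)`, where `h'` is `h` conjugated letterwise by the product `g₁ ⋯ gₙ = 1`.
Only forward moves occur, and concatenation is structural on lists, so the argument runs on lists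
and is transferred to tuples through `List.ofFn`. -/

open Relation

section BraidStep

variable {G : Type*} [Group G]

def BraidStep (l l' : List G) : Prop :=
  ∃ (l₁ : List G) (a b : G) (l₂ : List G),
    l = l₁ ++ a :: b :: l₂ ∧ l' = l₁ ++ (a * b * a⁻¹) :: a :: l₂

theorem BraidStep.append_left {l l' : List G} (h : BraidStep l l') (s : List G) :
    BraidStep (s ++ l) (s ++ l') := by
  obtain ⟨l₁, a, b, l₂, rfl, rfl⟩ := h
  exact ⟨s ++ l₁, a, b, l₂, by simp, by simp⟩

theorem BraidStep.append_right {l l' : List G} (h : BraidStep l l') (t : List G) :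
    BraidStep (l ++ t) (l' ++ t) := by
  obtain ⟨l₁, a, b, l₂, rfl, rfl⟩ := h
  exact ⟨l₁, a, b, l₂ ++ t, by simp, by simp⟩

theorem reflTransGen_braidStep_append_left {l l' : List G} (h : ReflTransGen BraidStep l l')
    (s : List G) : ReflTransGen BraidStep (s ++ l) (s ++ l') :=
  h.lift _ fun _ _ hstep ↦ hstep.append_left s

theorem reflTransGen_braidStep_append_right {l l' : List G} (h : ReflTransGen BraidStep l l')
    (t : List G) : ReflTransGen BraidStep (l ++ t) (l' ++ t) :=
  h.lift _ fun _ _ hstep ↦ hstep.append_right t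

theorem reflTransGen_braidStep_cons (a : G) (l : List G) :
    ReflTransGen BraidStep (a :: l) (l.map (MulAut.conj a) ++ [a]) := by
  induction l with
  | nil => rfl
  | cons x l ih =>
    have hhead : BraidStep (a :: x :: l) (MulAut.conj a x :: a :: l) := ⟨[], a, x, l, rfl, rfl⟩
    exact ReflTransGen.head hhead (reflTransGen_braidStep_append_left ih [MulAut.conj a x])

theorem reflTransGen_braidStep_append_swap (g h : List G) :
    ReflTransGen BraidStep (g ++ h) (h.map (MulAut.conj g.prod) ++ g) := by
  induction g with
  | nil => simpa using ReflTransGen.refl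
  | cons a g ih =>
    have hcons := reflTransGen_braidStep_cons a (h.map (MulAut.conj g.prod))
    simpa [List.map_map, ← MulAut.mul_apply] using (reflTransGen_braidStep_append_left ih [a]).trans
      (reflTransGen_braidStep_append_right hcons g)

theorem ofFn_braidMove {N : ℕ} {f : Fin N → G} {l₁ l₂ : List G} {a b : G}
    (hf : List.ofFn f = l₁ ++ a :: b :: l₂) (hi : l₁.length + 1 < N) :
    List.ofFn (braidMove l₁.length hi f) = l₁ ++ (a * b * a⁻¹) :: a :: l₂ := by
  have hN : N = l₁.length + l₂.length + 2 := by
    simpa [← add_assoc] using congrArg List.length hf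
  have hf' (j : ℕ) (hj : j < N) : f ⟨j, hj⟩ = (l₁ ++ a :: b :: l₂)[j]'(by simp; omega) :=
    (List.getElem_ofFn (by simpa using hj)).symm.trans (List.getElem_of_eq hf _)
  apply List.ext_getElem (by simp; omega)
  intro j hj _
  simp only [List.getElem_ofFn, braidMove, hf', List.getElem_append]
  grind

theorem BraidStep.exists_ofFn_braidMove {N : ℕ} {f : Fin N → G} {l : List G}
    (h : BraidStep (List.ofFn f) l) :
    ∃ (i : ℕ) (hi : i + 1 < N), List.ofFn (braidMove i hi f) = l := by
  obtain ⟨l₁, a, b, l₂, hf, rfl⟩ := h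
  have hi : l₁.length + 1 < N := by
    have hlen := congrArg List.length hf
    simp at hlen
    omega
  exact ⟨l₁.length, hi, ofFn_braidMove hf hi⟩

theorem exists_braidEquiv_of_reflTransGen_braidStep {N : ℕ} {f : Fin N → G} {l : List G}
    (h : ReflTransGen BraidStep (List.ofFn f) l) : ∃ f', BraidEquiv f f' ∧ List.ofFn f' = l := by
  induction h with
  | refl => exact ⟨f, EqvGen.refl f, rfl⟩
  | tail _ hstep ih =>
    obtain ⟨f', hff', rfl⟩ := ih
    obtain ⟨i, hi, hmove⟩ := hstep.exists_ofFn_braidMove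
    exact ⟨_, hff'.trans _ _ _ (EqvGen.rel _ _ ⟨i, hi, rfl⟩), hmove⟩

theorem braidEquiv_of_reflTransGen_ofFn {N : ℕ} {f f' : Fin N → G}
    (h : ReflTransGen BraidStep (List.ofFn f) (List.ofFn f')) : BraidEquiv f f' := by
  obtain ⟨f'', hff'', hf''⟩ := exists_braidEquiv_of_reflTransGen_braidStep h
  rwa [← List.ofFn_injective hf'']

end BraidStep

theorem braidEquiv_append_comm_general {G : Type*} [Group G] {n m : ℕ}
    (g : Fin n → G) (h : Fin m → G)
    (hmono : (List.ofFn g).prod = 1) :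
    BraidEquiv (Fin.append g h) (Fin.append h g ∘ Fin.cast (Nat.add_comm n m)) := by
  apply braidEquiv_of_reflTransGen_ofFn
  have hcast : List.ofFn (Fin.append h g ∘ Fin.cast (Nat.add_comm n m)) =
      List.ofFn (Fin.append h g) := (List.ofFn_congr (Nat.add_comm m n) _).symm
  rw [hcast, List.ofFn_fin_append, List.ofFn_fin_append]
  simpa [hmono] using reflTransGen_braidStep_append_swap (List.ofFn g) (List.ofFn h)

/-- If `(g_1,…,g_n) ∈ c^n` has trivial global monodromy, then for any
`(h_1,…,h_m) ∈ c^m` the concatenations `(g,h)` and `(h,g)` are equivalent under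
the braid group action. -/
theorem braidEquiv_append_comm {G : Type*} [Group G] (c : Set G)
    (hc : ∀ g ∈ c, ∀ h ∈ c, g * h * g⁻¹ ∈ c) {n m : ℕ}
    (g : Fin n → G) (h : Fin m → G) (hgc : ∀ j, g j ∈ c) (hhc : ∀ j, h j ∈ c)
    (hmono : (List.ofFn g).prod = 1) :
    BraidEquiv (Fin.append g h) (Fin.append h g ∘ Fin.cast (Nat.add_comm n m)) :=
  braidEquiv_append_comm_general g h hmono
end
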